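/- Scalar Kantorovich-type maximization: for 0 < m < M, p ≤ 0 and -1 ≤ q ≤ 0, the function h(t) = a·t^(1-q) + b·t^(-q) on [m,M], with a = (M^p - m^p)/(M-m) ≤ 0 and b = (M m^p - m M^p)/(M-m) ≥ 0, is concave on [m,M] (h'' ≤ 0), and its maximum over [m,M] equals (b/(1-q))·((1-q)a/(qb))^q provided t₀ = qb/((1-q)a) lies in [m,M]. -/

import Mathlib

/-!
Both terms of `h(t) = a t^(1-q) + b t^(-q)` are concave on `[0, ∞)`: `t^(1-q)` is convex because
`1 - q ≥ 1` and `a ≤ 0`, while `t^(-q)` is concave because `0 ≤ -q ≤ 1` and `b ≥ 0`. The signs of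
`a` and `b` come from `t ↦ t^p` and `t ↦ t^(p-1)` being antitone for `p ≤ 0`. Since
`h'(t) = t^(-q-1) ((1-q) a t - q b)` vanishes at `t₀ = q b / ((1-q) a)`, concavity makes `t₀` a
global maximiser, and `h(t₀) = (a t₀ + b) t₀^(-q) = (b / (1-q)) t₀^(-q)`.
-/

open Real Set

lemma ConcaveOn.isMaxOn_of_hasDerivAt_eq_zero {S : Set ℝ} {f : ℝ → ℝ} {x : ℝ}
    (hf : ConcaveOn ℝ S f) (hx : x ∈ interior S) (hf' : HasDerivAt f 0 x) : IsMaxOn f S x := by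
  have hrd : derivWithin (-f) (Ioi x) x = 0 := by
    rw [hf'.neg.hasDerivWithinAt.derivWithin (uniqueDiffWithinAt_Ioi x), neg_zero]
  simpa using (hf.neg.isMinOn_of_rightDeriv_eq_zero hx hrd).neg

lemma IsMaxOn.isGreatest_image {α β : Type*} [Preorder β] {f : α → β} {s : Set α} {x : α}
    (hf : IsMaxOn f s x) (hx : x ∈ s) : IsGreatest (f '' s) (f x) :=
  ⟨mem_image_of_mem f hx, forall_mem_image.2 hf⟩

section Chord

variable {m M p : ℝ}

lemma rpow_sub_rpow_div_sub_nonpos (hm : 0 < m) (hmM : m ≤ M) (hp : p ≤ 0) :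
    (M ^ p - m ^ p) / (M - m) ≤ 0 :=
  div_nonpos_of_nonpos_of_nonneg (sub_nonpos.2 (rpow_le_rpow_of_nonpos hm hmM hp))
    (sub_nonneg.2 hmM)

lemma mul_rpow_sub_mul_rpow_div_sub_nonneg (hm : 0 < m) (hmM : m ≤ M) (hp : p ≤ 1) :
    0 ≤ (M * m ^ p - m * M ^ p) / (M - m) := by
  have hM : 0 < M := hm.trans_le hmM
  have h := rpow_le_rpow_of_nonpos hm hmM (sub_nonpos.2 hp)
  rw [rpow_sub_one hM.ne', rpow_sub_one hm.ne', div_le_div_iff₀ hM hm] at h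
  exact div_nonneg (by linarith) (sub_nonneg.2 hmM)

end Chord

noncomputable def kantorovichFun (a b q t : ℝ) : ℝ := a * t ^ (1 - q) + b * t ^ (-q)

section KantorovichFun

variable {a b q : ℝ}

lemma hasDerivAt_kantorovichFun {t : ℝ} (ht : 0 < t) :
    HasDerivAt (kantorovichFun a b q) (t ^ (-q - 1) * ((1 - q) * a * t - q * b)) t := by
  have h1 := (hasDerivAt_rpow_const (p := 1 - q) (Or.inl ht.ne')).const_mul a
  have h2 := (hasDerivAt_rpow_const (p := -q) (Or.inl ht.ne')).const_mul b
  refine (h1.add h2).congr_deriv ?_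
  rw [show 1 - q - 1 = -q by ring, show -q = -q - 1 + 1 by ring, rpow_add_one ht.ne']
  ring_nf

lemma concaveOn_kantorovichFun (ha : a ≤ 0) (hb : 0 ≤ b) (hq1 : -1 ≤ q) (hq0 : q ≤ 0) :
    ConcaveOn ℝ (Ici 0) (kantorovichFun a b q) := by
  have h1 : ConcaveOn ℝ (Ici 0) (fun t : ℝ => a * t ^ (1 - q)) := by
    refine neg_convexOn_iff.1 (((convexOn_rpow (p := 1 - q) (by linarith)).smul
      (c := -a) (by linarith)).congr fun t _ => ?_)
    simp only [smul_eq_mul, Pi.neg_apply, neg_mul]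
  have h2 : ConcaveOn ℝ (Ici 0) (fun t : ℝ => b * t ^ (-q)) :=
    (concaveOn_rpow (p := -q) (by linarith) (by linarith)).smul hb
  exact h1.add h2

lemma hasDerivAt_kantorovichFun_criticalPoint (ha : a ≠ 0) (hq : q ≠ 1)
    (ht₀ : 0 < q * b / ((1 - q) * a)) :
    HasDerivAt (kantorovichFun a b q) 0 (q * b / ((1 - q) * a)) := by
  convert hasDerivAt_kantorovichFun ht₀ using 1
  field_simp [sub_ne_zero.2 hq.symm]
  ring

lemma kantorovichFun_criticalPoint (ha : a ≠ 0) (hq : q ≠ 1)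
    (ht₀ : 0 < q * b / ((1 - q) * a)) :
    kantorovichFun a b q (q * b / ((1 - q) * a)) = b / (1 - q) * ((1 - q) * a / (q * b)) ^ q := by
  set t₀ := q * b / ((1 - q) * a)
  have hq' : 1 - q ≠ 0 := sub_ne_zero.2 hq.symm
  have hlin : a * t₀ + b = b / (1 - q) := by
    simp only [t₀]; field_simp; ring
  have hpow : ((1 - q) * a / (q * b)) ^ q = t₀ ^ (-q) := by
    rw [← inv_div, inv_rpow ht₀.le, rpow_neg ht₀.le]
  calc kantorovichFun a b q t₀ = (a * t₀ + b) * t₀ ^ (-q) := by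
        rw [kantorovichFun, sub_eq_add_neg, rpow_add ht₀, rpow_one]; ring
    _ = b / (1 - q) * ((1 - q) * a / (q * b)) ^ q := by rw [hlin, hpow]

end KantorovichFun

theorem stmt_19 (m M : ℝ) (hm : 0 < m) (hmM : m < M)
    (p q : ℝ) (hp : p ≤ 0) (hq1 : -1 ≤ q) (hq0 : q ≤ 0)
    (a b : ℝ) (ha : a = (M ^ p - m ^ p) / (M - m))
    (hb : b = (M * m ^ p - m * M ^ p) / (M - m)) :
    a ≤ 0 ∧ 0 ≤ b ∧
    ConcaveOn ℝ (Set.Icc m M) (fun t => a * t ^ (1 - q) + b * t ^ (-q)) ∧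
    (q * b / ((1 - q) * a) ∈ Set.Icc m M →
      IsGreatest ((fun t => a * t ^ (1 - q) + b * t ^ (-q)) '' Set.Icc m M)
        ((b / (1 - q)) * ((1 - q) * a / (q * b)) ^ q)) := by
  have ha0 : a ≤ 0 := ha ▸ rpow_sub_rpow_div_sub_nonpos hm hmM.le hp
  have hb0 : 0 ≤ b := hb ▸ mul_rpow_sub_mul_rpow_div_sub_nonneg hm hmM.le (by linarith)
  have hIcc : Icc m M ⊆ Ici 0 := fun t ht => hm.le.trans ht.1
  have hconc := concaveOn_kantorovichFun ha0 hb0 hq1 hq0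
  refine ⟨ha0, hb0, hconc.subset hIcc (convex_Icc m M), fun ht₀ => ?_⟩
  have ht₀pos : 0 < q * b / ((1 - q) * a) := hm.trans_le ht₀.1
  -- `a = 0` would make `t₀ = 0` through division by zero
  have ha' : a ≠ 0 := by rintro rfl; simp at ht₀pos
  have hq : q ≠ 1 := by linarith
  have hmax : IsMaxOn (kantorovichFun a b q) (Icc m M) (q * b / ((1 - q) * a)) :=
    (hconc.isMaxOn_of_hasDerivAt_eq_zero (by rwa [interior_Ici])
      (hasDerivAt_kantorovichFun_criticalPoint ha' hq ht₀pos)).on_subset hIcc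
  rw [← kantorovichFun_criticalPoint ha' hq ht₀pos]
  exact hmax.isGreatest_image ht₀
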